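/- arXiv:1306.1007 — 3 statements merged into one kernel-verified Lean document; each statement's English description precedes it below -/
import Mathlib

section
/- With r = |p₁ − p₂|/2, p̂ = (p₁ − p₂)/(2r) and c = (p₁ + p₂)/2, the point-pair bivector satisfies P₁∧P₂ = 2r·{ p̂∧c + (1/2)[(c² + r²)p̂ − 2(c·p̂)c]n + p̂n̄ + (c·p̂)N }. -/
noncomputable section
open scoped RealInnerProductSpace

/-- Euclidean 3-space. -/
abbrev E3 : Type := EuclideanSpace ℝ (Fin 3)

/-- The 5-dimensional space ℝ^{4,1}: Euclidean part plus coefficients of the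
null vectors n (infinity) and n̄ (origin). -/
abbrev V5 : Type := E3 × ℝ × ℝ

/-- Symmetric bilinear form of signature (4,1):
`⟪p,q⟫` on the Euclidean part, and `n·n̄ = -1` on the null pair. -/
def B5 : LinearMap.BilinForm ℝ V5 := LinearMap.mk₂ ℝ
  (fun x y => ⟪x.1, y.1⟫ - x.2.1 * y.2.2 - x.2.2 * y.2.1)
  (fun m₁ m₂ y => by simp only [Prod.fst_add, Prod.snd_add, inner_add_left]; ring)
  (fun c m y => by simp only [Prod.smul_fst, Prod.smul_snd, smul_eq_mul, real_inner_smul_left]; ring)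
  (fun m y₁ y₂ => by simp only [Prod.fst_add, Prod.snd_add, inner_add_right]; ring)
  (fun c m y => by simp only [Prod.smul_fst, Prod.smul_snd, smul_eq_mul, real_inner_smul_right]; ring)

/-- The quadratic form of R_{4,1}. -/
def Q5 : QuadraticForm ℝ V5 := B5.toQuadraticMap

/-- The Clifford geometric algebra R_{4,1}. -/
abbrev Cl : Type := CliffordAlgebra Q5

def ι5 : V5 →ₗ[ℝ] Cl := CliffordAlgebra.ι Q5

/-- Embedding of a Euclidean vector as a grade-1 element. -/
def ev (p : E3) : Cl := ι5 (p, 0, 0)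

/-- The null vector n representing infinity. -/
def nInf : Cl := ι5 (0, 1, 0)

/-- The null vector n̄ representing the origin. -/
def nOri : Cl := ι5 (0, 0, 1)

/-- The conformal point P = p + (1/2)p² n + n̄. -/
def cpt (p : E3) : Cl := ι5 (p, ⟪p, p⟫ / 2, 1)

/-- Outer (wedge) product of two vectors (grade-1 elements): antisymmetrized
geometric product. -/
def w2 (a b : Cl) : Cl := (2:ℝ)⁻¹ • (a * b - b * a)

/-- Outer (wedge) product of three vectors. -/
def w3 (a b c : Cl) : Cl := (6:ℝ)⁻¹ •
  (a*b*c - a*c*b - b*a*c + b*c*a + c*a*b - c*b*a)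

/-- Outer (wedge) product of a vector with a bivector. -/
def vwB (v B : Cl) : Cl := (2:ℝ)⁻¹ • (v * B + B * v)

/-- Left contraction of a vector into a bivector. -/
def lcontr (v B : Cl) : Cl := (2:ℝ)⁻¹ • (v * B - B * v)

/-- The Minkowski plane bivector N = n ∧ n̄. -/
def Nb : Cl := w2 nInf nOri

lemma nInf_ev (p : E3) : nInf * ev p = -(ev p * nInf) := by
  have ho : Q5.IsOrtho (0,1,0) (p,0,0) := by
    simp [QuadraticMap.isOrtho_def, Q5, LinearMap.BilinMap.toQuadraticMap_apply, B5, Prod.add_def]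
  simpa [nInf, ev, ι5] using CliffordAlgebra.ι_mul_ι_comm_of_isOrtho ho

lemma nOri_ev (p : E3) : nOri * ev p = -(ev p * nOri) := by
  have ho : Q5.IsOrtho (0,0,1) (p,0,0) := by
    simp [QuadraticMap.isOrtho_def, Q5, LinearMap.BilinMap.toQuadraticMap_apply, B5, Prod.add_def]
  simpa [nOri, ev, ι5] using CliffordAlgebra.ι_mul_ι_comm_of_isOrtho ho

lemma cpt_decomp (p : E3) : cpt p = ev p + (⟪p, p⟫ / 2) • nInf + nOri := by
  have hv : ((p, ⟪p, p⟫ / 2, 1) : V5) = (p,0,0) + (⟪p, p⟫ / 2) • (0,1,0) + (0,0,1) := by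
    simp [Prod.ext_iff]
  rw [cpt, hv, map_add, map_add, map_smul]; rfl

lemma ev_comb (a b : ℝ) (x y : E3) : ev (a • x - b • y) = a • ev x - b • ev y := by
  have hv : ((a • x - b • y, (0:ℝ), (0:ℝ)) : V5) = a • (x,0,0) - b • (y,0,0) := by
    simp [Prod.ext_iff]
  rw [ev, hv, map_sub, map_smul, map_smul]; rfl

lemma ev_add_smul (x : E3) (a : ℝ) (y : E3) : ev (x + a • y) = ev x + a • ev y := by
  have hv : ((x + a • y, (0:ℝ), (0:ℝ)) : V5) = (x,0,0) + a • (y,0,0) := by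
    simp [Prod.ext_iff]
  rw [ev, hv, map_add, map_smul]; rfl

/-- point pair as a one-dimensional circle. -/
theorem point_pair_circle_form (p₁ p₂ : E3) (h : p₁ ≠ p₂)
    (r : ℝ) (hr : r = ‖p₁ - p₂‖ / 2)
    (phat : E3) (hp : phat = (2 * r)⁻¹ • (p₁ - p₂))
    (c : E3) (hc : c = (2:ℝ)⁻¹ • (p₁ + p₂)) :
    w2 (cpt p₁) (cpt p₂) =
      (2 * r) • (w2 (ev phat) (ev c)
        + (2:ℝ)⁻¹ • (ev ((⟪c, c⟫ + r ^ 2) • phat - (2 * ⟪c, phat⟫) • c) * nInf)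
        + ev phat * nOri
        + ⟪c, phat⟫ • Nb) := by
  have hne : p₁ - p₂ ≠ 0 := sub_ne_zero.mpr h
  have hnp : 0 < ‖p₁ - p₂‖ := norm_pos_iff.mpr hne
  have hrpos : 0 < r := by rw [hr]; linarith
  have hr0 : r ≠ 0 := ne_of_gt hrpos
  have hp1 : p₁ = c + r • phat := by
    rw [hp, hc, smul_smul, show r * (2*r)⁻¹ = (2:ℝ)⁻¹ by field_simp]
    module
  have hp2 : p₂ = c + (-r) • phat := by
    rw [hp, hc, smul_smul, show -r * (2*r)⁻¹ = -(2:ℝ)⁻¹ by field_simp]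
    module
  have hnorm : ‖phat‖ = 1 := by
    rw [hp, norm_smul, Real.norm_eq_abs, abs_of_pos (by positivity), hr]
    field_simp
  have hunit : ⟪phat, phat⟫ = 1 := by
    rw [real_inner_self_eq_norm_mul_norm, hnorm]; ring
  have hq1 : ⟪p₁, p₁⟫ = ⟪c, c⟫ + 2*r*⟪c, phat⟫ + r^2 := by
    rw [hp1]
    simp only [real_inner_add_add_self, real_inner_smul_left, real_inner_smul_right, hunit]
    ring
  have hq2 : ⟪p₂, p₂⟫ = ⟪c, c⟫ - 2*r*⟪c, phat⟫ + r^2 := by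
    rw [hp2]
    simp only [real_inner_add_add_self, real_inner_smul_left, real_inner_smul_right, hunit]
    ring
  rw [cpt_decomp, cpt_decomp, hq1, hq2, ev_comb]
  rw [show ev p₁ = ev c + r • ev phat from hp1 ▸ ev_add_smul c r phat,
      show ev p₂ = ev c + (-r) • ev phat from hp2 ▸ ev_add_smul c (-r) phat]
  simp only [w2, Nb]
  simp only [mul_add, add_mul, mul_sub, sub_mul, smul_mul_assoc, mul_smul_comm, smul_smul,
    smul_add, smul_sub, nInf_ev, nOri_ev, mul_neg, neg_mul, smul_neg, neg_neg, neg_smul]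
  module
end
end

section
/- Let V_line = m n + d N with m = p₁∧p₂ and d = p₂ − p₁ ≠ 0. Then for every real α, the point x = (m + α)d⁻¹ is a Euclidean vector lying on the line through p₁ and p₂, and conversely every point of that line has this form; equivalently, the conformal point X of x satisfies V_line ∧ X = 0. -/
noncomputable section
open scoped RealInnerProductSpace

/-!
Write `V = P₁ ∧ P₂ ∧ n` and `d = p₂ - p₁`. Since the Clifford product of vectors satisfies
`a² ∈ ℝ` and `ab + ba ∈ ℝ`, the 4-vector `V ∧ v` vanishes for every vector `v` in the span of
`P₁, P₂, n`. As `X - (x - p₁)` lies in that span, `V ∧ X = V ∧ (x - p₁)`, which vanishes when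
`x - p₁` is a multiple of `d`. Conversely, contracting `V ∧ y` with `n̄` and then with `n` leaves
the Euclidean bivector `d ∧ y`, and `d ∧ y = 0` forces `y ∥ d` because `(y ∧ d) d = d² y - (y·d) d`.
The same identity gives `(m + α) d = (p₁ ∧ d) d + α d = d² p₁ + (α - p₁·d) d`, which is the
parametrization.
-/

open CliffordAlgebra

theorem w2_add_right (a b c : Cl) : w2 a (b + c) = w2 a b + w2 a c := by
  simp only [w2, mul_add, add_mul]; module

theorem w2_smul_right (a b : Cl) (r : ℝ) : w2 a (r • b) = r • w2 a b := by
  simp only [w2, mul_smul_comm, smul_mul_assoc, ← smul_sub, smul_comm r]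

theorem w2_comm (a b : Cl) : w2 b a = - w2 a b := by
  simp only [w2, ← smul_neg, neg_sub]

theorem w2_self_add_right (a b : Cl) : w2 a (a + b) = w2 a b := by
  simp only [w2, mul_add, add_mul]; module

theorem w3_rotate (a b c : Cl) : w3 a b c = w3 b c a := by
  simp only [w3]; congr 1; noncomm_ring

theorem ι5_injective : Function.Injective ι5 := by
  intro u v h
  rw [← sub_eq_zero, ← Module.forall_dual_apply_eq_zero_iff ℝ]
  intro f
  have hf := congrArg (contractLeft f) h
  simp only [ι5, contractLeft_ι] at hf
  have : Invertible (2 : ℝ) := invertibleOfNonzero two_ne_zero -- makes `Cl` nontrivial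
  rw [map_sub, sub_eq_zero]
  exact (algebraMap ℝ Cl).injective hf

theorem ev_injective : Function.Injective ev := fun u v h => by
  simpa using ι5_injective h

theorem ev_zero : ev 0 = 0 := map_zero ι5

theorem ev_add (p q : E3) : ev (p + q) = ev p + ev q := by
  simp only [ev, ← map_add, Prod.mk_add_mk, add_zero]

theorem ev_sub (p q : E3) : ev (p - q) = ev p - ev q := by
  simp only [ev, ← map_sub, Prod.mk_sub_mk, sub_zero]

theorem ev_smul (r : ℝ) (p : E3) : ev (r • p) = r • ev p := by
  simp only [ev, ← map_smul, Prod.smul_mk, smul_zero]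

theorem cpt_eq_ι5 (p : E3) : cpt p = ι5 (p, ⟪p, p⟫ / 2, 1) := rfl

theorem nInf_eq_ι5 : nInf = ι5 (0, 1, 0) := rfl

theorem ι5_mul_ι5_mul_swap (u v : V5) (z : Cl) :
    ι5 v * (ι5 u * z) = QuadraticMap.polar Q5 v u • z - ι5 u * (ι5 v * z) := by
  rw [← mul_assoc, ← mul_assoc, ι5, ι_mul_ι_comm, sub_mul, Algebra.smul_def]

theorem ι5_mul_ι5_swap (u v : V5) :
    ι5 v * ι5 u = QuadraticMap.polar Q5 v u • (1 : Cl) - ι5 u * ι5 v := by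
  simpa using ι5_mul_ι5_mul_swap u v 1

theorem ι5_mul_ι5_mul_self (u : V5) (z : Cl) : ι5 u * (ι5 u * z) = Q5 u • z := by
  rw [← mul_assoc, ι5, ι_sq_scalar, Algebra.smul_def]

theorem w2_w3_ι5_left (a b c : V5) : w2 (w3 (ι5 a) (ι5 b) (ι5 c)) (ι5 a) = 0 := by
  simp only [w2, w3, sub_mul, add_mul, mul_sub, mul_add, smul_mul_assoc, mul_smul_comm, mul_assoc,
    ι5_mul_ι5_mul_swap a b, ι5_mul_ι5_swap a b, ι5_mul_ι5_swap a c, ι5_mul_ι5_swap b c,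
    ι5_mul_ι5_mul_self a, mul_one, one_mul, smul_sub, smul_add]
  module

theorem w2_w3_ι5_smul_add_smul_add_smul (a b c : V5) (r s t : ℝ) :
    w2 (w3 (ι5 a) (ι5 b) (ι5 c)) (ι5 (r • a + s • b + t • c)) = 0 := by
  have hb : w2 (w3 (ι5 a) (ι5 b) (ι5 c)) (ι5 b) = 0 := by
    rw [w3_rotate, w2_w3_ι5_left]
  have hc : w2 (w3 (ι5 a) (ι5 b) (ι5 c)) (ι5 c) = 0 := by
    rw [← w3_rotate, w2_w3_ι5_left]
  simp only [map_add, map_smul, w2_add_right, w2_smul_right, w2_w3_ι5_left, hb, hc, smul_zero,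
    add_zero]

theorem contractLeft_w2_w3_ι5 (f g : Module.Dual ℝ V5) (a b c x : V5) (hfx : f x = 0)
    (hgx : g x = 0) :
    contractLeft g (contractLeft f (w2 (w3 (ι5 a) (ι5 b) (ι5 c)) (ι5 x))) =
      w2 (ι5 ((f a * g b - f b * g a) • c - (f a * g c - f c * g a) • b
        + (f b * g c - f c * g b) • a)) (ι5 x) := by
  simp only [w2, w3, ι5, sub_mul, add_mul, mul_assoc, map_sub, map_add, map_smul,
    contractLeft_ι_mul, contractLeft_ι, hfx, hgx, map_zero, zero_smul, mul_zero, sub_zero, zero_sub,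
    smul_sub, smul_add, mul_sub, mul_add, smul_neg, smul_mul_assoc, mul_smul_comm, smul_smul,
    map_neg, Algebra.algebraMap_eq_smul_one, mul_one]
  module

theorem w2_ev_mul_ev (u v : E3) : w2 (ev u) (ev v) * ev v = ev (⟪v, v⟫ • u - ⟪u, v⟫ • v) := by
  simp only [w2, smul_mul_assoc, sub_mul, mul_assoc]
  rw [← mul_assoc (ev v)]
  simp only [ev, ι5]
  rw [ι_sq_scalar, ι_mul_ι_mul_ι, ← Algebra.commutes, ← Algebra.smul_def, ← map_smul, ← map_sub,
    ← map_smul]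
  congr 1
  simp only [Q5, LinearMap.BilinMap.polar_toQuadraticMap, LinearMap.BilinMap.toQuadraticMap_apply,
    B5, LinearMap.mk₂_apply]
  ext <;> simp [real_inner_comm u v]
  ring

theorem exists_eq_smul_of_w2_ev_eq_zero {d y : E3} (hd : d ≠ 0) (h : w2 (ev d) (ev y) = 0) :
    ∃ t : ℝ, y = t • d := by
  have hdd : ⟪d, d⟫ ≠ 0 := inner_self_ne_zero.mpr hd
  have h' : ev (⟪d, d⟫ • y - ⟪y, d⟫ • d) = 0 := by
    rw [← w2_ev_mul_ev, w2_comm, h, neg_zero, zero_mul]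
  have hy : ⟪d, d⟫ • y = ⟪y, d⟫ • d := sub_eq_zero.mp (ev_injective (h'.trans ev_zero.symm))
  refine ⟨⟪y, d⟫ / ⟪d, d⟫, ?_⟩
  rw [div_eq_inv_mul, mul_smul, ← hy, smul_smul, inv_mul_cancel₀ hdd, one_smul]

theorem line_moment_add_mul_direction_inv (p₁ p₂ : E3) (α : ℝ) (hd : ⟪p₂ - p₁, p₂ - p₁⟫ ≠ 0) :
    (w2 (ev p₁) (ev p₂) + algebraMap ℝ Cl α) * ((⟪p₂ - p₁, p₂ - p₁⟫)⁻¹ • ev (p₂ - p₁)) =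
      ev (p₁ + ((α - ⟪p₁, p₂ - p₁⟫) / ⟪p₂ - p₁, p₂ - p₁⟫) • (p₂ - p₁)) := by
  have hm : w2 (ev p₁) (ev p₂) = w2 (ev p₁) (ev (p₂ - p₁)) := by
    rw [ev_sub, ← w2_self_add_right (ev p₁) (ev p₂ - ev p₁), add_sub_cancel]
  rw [hm, mul_smul_comm, add_mul, w2_ev_mul_ev, ← Algebra.smul_def, ← ev_smul, ← ev_add,
    ← ev_smul]
  congr 1
  match_scalars <;> field_simp <;> ring

theorem line_wedge_cpt (p₁ p₂ x : E3) :
    w2 (w3 (cpt p₁) (cpt p₂) nInf) (cpt x) = w2 (w3 (cpt p₁) (cpt p₂) nInf) (ev (x - p₁)) := by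
  have hx : cpt x = ev (x - p₁) + ι5 ((1 : ℝ) • (p₁, ⟪p₁, p₁⟫ / 2, 1)
      + (0 : ℝ) • (p₂, ⟪p₂, p₂⟫ / 2, 1) + ((⟪x, x⟫ - ⟪p₁, p₁⟫) / 2) • ((0, 1, 0) : V5)) := by
    rw [cpt_eq_ι5, ev, ← map_add]
    congr 1
    ext <;> simp
    ring
  rw [hx, w2_add_right, cpt_eq_ι5, cpt_eq_ι5, nInf_eq_ι5, w2_w3_ι5_smul_add_smul_add_smul,
    add_zero]

theorem line_wedge_ev_smul_sub (p₁ p₂ : E3) (t : ℝ) :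
    w2 (w3 (cpt p₁) (cpt p₂) nInf) (ev (t • (p₂ - p₁))) = 0 := by
  have ht : ev (t • (p₂ - p₁)) = ι5 ((-t) • (p₁, ⟪p₁, p₁⟫ / 2, 1) + t • (p₂, ⟪p₂, p₂⟫ / 2, 1)
      + (t * (⟪p₁, p₁⟫ - ⟪p₂, p₂⟫) / 2) • ((0, 1, 0) : V5)) := by
    rw [ev]
    congr 1
    ext <;> simp <;> ring
  rw [ht, cpt_eq_ι5, cpt_eq_ι5, nInf_eq_ι5, w2_w3_ι5_smul_add_smul_add_smul]

theorem contractLeft_contractLeft_line_wedge_ev (p₁ p₂ y : E3) :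
    contractLeft (B5 (0, 1, 0)) (contractLeft (B5 (0, 0, 1))
      (w2 (w3 (cpt p₁) (cpt p₂) nInf) (ev y))) = w2 (ev (p₂ - p₁)) (ev y) := by
  rw [cpt_eq_ι5, cpt_eq_ι5, nInf_eq_ι5, ev, contractLeft_w2_w3_ι5 _ _ _ _ _ _ (by simp [B5])
    (by simp [B5]), ev]
  congr 2
  simp only [B5, LinearMap.mk₂_apply]
  ext <;> simp
  ring

/-- parametric solution of the line equation:
x = (m + α)d⁻¹ parametrizes exactly the line through p₁ and p₂, which is
exactly the solution set of V_line ∧ X = 0 for conformal points X. -/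
theorem line_parametrization (p₁ p₂ : E3) (h : p₁ ≠ p₂) (x : E3) :
    ((∃ α : ℝ, ev x =
        (w2 (ev p₁) (ev p₂) + algebraMap ℝ Cl α) *
          ((⟪p₂ - p₁, p₂ - p₁⟫)⁻¹ • ev (p₂ - p₁))) ↔
      (∃ t : ℝ, x = p₁ + t • (p₂ - p₁))) ∧
    ((∃ t : ℝ, x = p₁ + t • (p₂ - p₁)) ↔
      w2 (w3 (cpt p₁) (cpt p₂) nInf) (cpt x) = 0) := by
  have hd : p₂ - p₁ ≠ 0 := sub_ne_zero_of_ne h.symm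
  have hdd : ⟪p₂ - p₁, p₂ - p₁⟫ ≠ 0 := inner_self_ne_zero.mpr hd
  refine ⟨?_, ?_⟩
  · simp_rw [line_moment_add_mul_direction_inv p₁ p₂ _ hdd, ev_injective.eq_iff]
    refine ⟨fun ⟨α, hα⟩ => ⟨_, hα⟩,
      fun ⟨t, ht⟩ => ⟨t * ⟪p₂ - p₁, p₂ - p₁⟫ + ⟪p₁, p₂ - p₁⟫, ?_⟩⟩
    rw [ht, add_sub_cancel_right, mul_div_cancel_right₀ t hdd]
  · rw [line_wedge_cpt]
    constructor
    · rintro ⟨t, rfl⟩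
      rw [add_sub_cancel_left, line_wedge_ev_smul_sub]
    · intro hX
      obtain ⟨t, ht⟩ := exists_eq_smul_of_w2_ev_eq_zero hd
        (by rw [← contractLeft_contractLeft_line_wedge_ev, hX, map_zero, map_zero])
      exact ⟨t, by rw [← ht, add_sub_cancel]⟩
end
end

section
/- For the sphere 4-vector V₄ = P₁∧P₂∧P₃∧P₄ of four conformal points on a sphere of radius r with i_s = −(V₄∧n)N ≠ 0, one has r² = V₄²/(V₄∧n)² and the conformal center satisfies C = (1/2)r²n + V₄/(−V₄∧n). -/
noncomputable section
open scoped RealInnerProductSpace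

/-- Outer (wedge) product of four vectors. -/
def w4 (a b c d : Cl) : Cl := (24:ℝ)⁻¹ •
  (a*b*c*d - a*b*d*c - a*c*b*d + a*c*d*b + a*d*b*c - a*d*c*b - b*a*c*d + b*a*d*c + b*c*a*d - b*c*d*a - b*d*a*c + b*d*c*a + c*a*b*d - c*a*d*b - c*b*a*d + c*b*d*a + c*d*a*b - c*d*b*a - d*a*b*c + d*a*c*b + d*b*a*c - d*b*c*a - d*c*a*b + d*c*b*a)

/-- Outer product of a 4-vector with a vector (grade 4 ∧ grade 1). -/
def fwv (A v : Cl) : Cl := (2:ℝ)⁻¹ • (A * v + v * A)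

/-!
Translating by `c`, the conformal points `Pₖ` are the images of the vectors `(r rₖ, 1)` of the
4-dimensional space `E3 × ℝ` under one linear map `(v, t) ↦ T_c (v + t (n̄ + ½ r² n))` into the
vectors of `R_{4,1}`. As `w4` is alternating, `V₄` is then a multiple `α • (J * H)` of the wedge of
the image of a basis, where `J` (`framePseudoscalar`) is the translated Euclidean pseudoscalar and
`H = C + ½ r² n` (`sphereFrame c r 3`): `J² = -1`, `H² = -r²`, `n·H = -1`, and `J` anticommutes
with `H` and `n`. Hence `V₄∧n = α J (H n + 1)`, `(V₄∧n)² = -α²`, `V₄² = -α² r²` and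
`V₄ (-V₄∧n) = -α² (H - r² n)`; finally `α ≠ 0` because `V₄∧n ≠ 0`.
-/

def AntiCommute {A : Type*} [Mul A] [Neg A] (a b : A) : Prop := a * b = -(b * a)

namespace AntiCommute

variable {A : Type*} [Ring A] {a b c : A}

theorem eq (h : AntiCommute a b) : a * b = -(b * a) := h

theorem symm (h : AntiCommute a b) : AntiCommute b a := by
  rw [AntiCommute, h.eq, neg_neg]

theorem left_comm (h : AntiCommute a b) (x : A) : a * (b * x) = -(b * (a * x)) := by
  rw [← mul_assoc, h.eq, neg_mul, mul_assoc]

theorem commute_mul (hab : AntiCommute a b) (hac : AntiCommute a c) : Commute a (b * c) := by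
  unfold Commute SemiconjBy
  rw [← mul_assoc, hab.eq, neg_mul, mul_assoc, hac.eq, mul_neg, neg_neg, mul_assoc]

theorem _root_.Commute.antiCommute_mul (hab : Commute a b) (hac : AntiCommute a c) :
    AntiCommute a (b * c) := by
  rw [AntiCommute, ← mul_assoc, hab.eq, mul_assoc, hac.eq, mul_neg, mul_assoc]

theorem mul_mul {x : A} (ha : AntiCommute x a) (hb : AntiCommute x b)
    (hc : AntiCommute x c) : AntiCommute x (a * b * c) :=
  (ha.commute_mul hb).antiCommute_mul hc

theorem mul_mul_self (h : AntiCommute a b) : a * b * (a * b) = -(a * a * (b * b)) := by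
  rw [show a * b * (a * b) = a * (b * a) * b by noncomm_ring, h.symm.eq]
  noncomm_ring

theorem mul_mul_mul_left (ha : a * a = -1) (hab : AntiCommute a b) (x : A) :
    a * b * (a * x) = b * x := by
  rw [show a * b * (a * x) = a * (b * a) * x by noncomm_ring, hab.symm.eq,
    show a * -(a * b) * x = -(a * a * b * x) by noncomm_ring, ha]
  noncomm_ring

end AntiCommute

section Ring

variable {A : Type*} [Ring A]

theorem mul_mul_self_eq_neg_one_of_antiCommute {a b c : A} (ha : a * a = 1) (hb : b * b = 1)
    (hc : c * c = 1) (hab : AntiCommute a b) (hac : AntiCommute a c) (hbc : AntiCommute b c) :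
    a * b * c * (a * b * c) = -1 := by
  have hcab : Commute c (a * b) := hac.symm.commute_mul hbc.symm
  rw [hcab.mul_mul_mul_comm, hab.mul_mul_self, ha, hb, hc]
  simp

variable {J H n : A}

theorem mul_mul_add_mul_mul_of_antiCommute (hJn : AntiCommute J n) (hnH : n * H + H * n = -2) :
    J * H * n + n * (J * H) = 2 * (J * (H * n + 1)) := by
  rw [← mul_assoc n J H, hJn.symm.eq, neg_mul, mul_assoc J n H, eq_sub_of_add_eq hnH]
  noncomm_ring

theorem mul_add_one_mul_self_of_antiCommute (hJ : J * J = -1) (hJH : AntiCommute J H)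
    (hJn : AntiCommute J n) (hn : n * n = 0) (hnH : n * H + H * n = -2) :
    J * (H * n + 1) * (J * (H * n + 1)) = -1 := by
  have hc : Commute J (H * n + 1) := (hJH.commute_mul hJn).add_right (Commute.one_right J)
  have hsq : (H * n + 1) * (H * n + 1) = 1 := by
    have hHn : H * n * (H * n) = -(2 * (H * n)) := by
      rw [mul_assoc, ← mul_assoc n, eq_sub_of_add_eq hnH, sub_mul, mul_assoc H, hn]
      noncomm_ring
    rw [add_mul, mul_add, hHn]
    noncomm_ring
  rw [hc.symm.mul_mul_mul_comm, hJ, hsq, mul_one]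

end Ring

theorem AlternatingMap.apply_eq_det_smul {R M N ι : Type*} [CommRing R] [AddCommGroup M]
    [Module R M] [AddCommGroup N] [Module R N] [Fintype ι] [DecidableEq ι]
    (e : Module.Basis ι R M) (f : M [⋀^ι]→ₗ[R] N) (v : ι → M) : f v = e.det v • f e := by
  suffices f = e.det.smulRight (f e) from DFunLike.congr_fun this v
  refine e.ext_alternating fun i hi => ?_
  let σ : Equiv.Perm ι := Equiv.ofBijective i (Finite.injective_iff_bijective.1 hi)
  change f (e ∘ σ) = e.det (e ∘ σ) • f e
  simp [AlternatingMap.map_perm, Module.Basis.det_self]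

set_option maxHeartbeats 400000 in
def w4Alternating : Cl [⋀^Fin 4]→ₗ[ℝ] Cl where
  toMultilinearMap := MultilinearMap.mk' (fun v => w4 (v 0) (v 1) (v 2) (v 3))
    (fun m i x y => by fin_cases i <;> simp [w4, mul_add, add_mul] <;> module)
    (fun m i t x => by fin_cases i <;> simp [w4] <;> module)
  map_eq_zero_of_eq' v i j h hij := by
    refine smul_eq_zero_of_right _ ?_
    fin_cases i <;> fin_cases j <;> simp at h hij <;> simp only [h] <;> noncomm_ring

theorem w4Alternating_apply (v : Fin 4 → Cl) :
    w4Alternating v = w4 (v 0) (v 1) (v 2) (v 3) := rfl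

theorem w4_eq_mul_of_antiCommute {a b c d : Cl} (hab : AntiCommute a b) (hac : AntiCommute a c)
    (had : AntiCommute a d) (hbc : AntiCommute b c) (hbd : AntiCommute b d)
    (hcd : AntiCommute c d) : w4 a b c d = a * b * c * d := by
  simp only [w4, mul_assoc, hab.symm.eq, hac.symm.eq, had.symm.eq, hbc.symm.eq, hbd.symm.eq,
    hcd.symm.eq, hab.symm.left_comm, hac.symm.left_comm, hbc.symm.left_comm,
    mul_neg, neg_mul, neg_neg]
  module

theorem fwv_smul_mul_nInf {J H : Cl} (hJn : AntiCommute J nInf)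
    (hnH : nInf * H + H * nInf = -2) (α : ℝ) :
    fwv (α • (J * H)) nInf = α • (J * (H * nInf + 1)) := by
  rw [fwv, smul_mul_assoc, mul_smul_comm, ← smul_add,
    mul_mul_add_mul_mul_of_antiCommute hJn hnH, smul_comm, two_mul, ← two_smul ℝ, smul_smul,
    smul_smul, mul_assoc, inv_mul_cancel₀ two_ne_zero, mul_one]

theorem B5_apply (x y : V5) : B5 x y = ⟪x.1, y.1⟫ - x.2.1 * y.2.2 - x.2.2 * y.2.1 := rfl

theorem B5_comm (x y : V5) : B5 x y = B5 y x := by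
  simp only [B5_apply, real_inner_comm]
  ring

theorem ι5_mul_self (x : V5) : ι5 x * ι5 x = algebraMap ℝ Cl (B5 x x) :=
  CliffordAlgebra.ι_sq_scalar Q5 x

theorem ι5_mul_add_swap (x y : V5) :
    ι5 x * ι5 y + ι5 y * ι5 x = algebraMap ℝ Cl (2 * B5 x y) := by
  rw [ι5, CliffordAlgebra.ι_mul_ι_add_swap, two_mul]
  nth_rw 2 [B5_comm]
  exact congrArg _ (LinearMap.BilinMap.polar_toQuadraticMap x y)

theorem antiCommute_ι5 {x y : V5} (h : B5 x y = 0) : AntiCommute (ι5 x) (ι5 y) := by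
  have := ι5_mul_add_swap x y
  rw [h, mul_zero, map_zero] at this
  exact eq_neg_of_add_eq_zero_left this

theorem nInf_mul_self : nInf * nInf = 0 := by
  simp [nInf, ι5_mul_self, B5_apply]

def translation (c : E3) : V5 →ₗ[ℝ] V5 where
  toFun x := (x.1 + x.2.2 • c, x.2.1 + ⟪c, x.1⟫ + x.2.2 * (⟪c, c⟫ / 2), x.2.2)
  map_add' x y := by
    simp only [Prod.fst_add, Prod.snd_add, add_smul, inner_add_right, Prod.mk_add_mk]
    congr 1 <;> [abel; (congr 1; ring)]
  map_smul' t x := by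
    simp only [Prod.smul_fst, Prod.smul_snd, smul_eq_mul, mul_smul, inner_smul_right,
      RingHom.id_apply, Prod.smul_mk]
    congr 1 <;> [rw [smul_add]; (congr 1; ring)]

theorem B5_translation (c : E3) (x y : V5) :
    B5 (translation c x) (translation c y) = B5 x y := by
  simp only [translation, LinearMap.coe_mk, AddHom.coe_mk, B5_apply, inner_add_left,
    inner_add_right, real_inner_smul_left, real_inner_smul_right, real_inner_comm c]
  ring

theorem translation_nInf (c : E3) : translation c (0, 1, 0) = (0, 1, 0) := by
  simp [translation]

theorem cpt_add (c p : E3) : cpt (c + p) = ι5 (translation c (p, ⟪p, p⟫ / 2, 1)) := by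
  simp only [cpt, translation, LinearMap.coe_mk, AddHom.coe_mk, one_smul, one_mul, add_comm p,
    inner_add_left, inner_add_right, real_inner_comm c p]
  congr 3
  ring

def sphereChart (r : ℝ) : E3 × ℝ →ₗ[ℝ] V5 where
  toFun u := (u.1, u.2 * (r ^ 2 / 2), u.2)
  map_add' u v := by simp only [Prod.fst_add, Prod.snd_add, add_mul, Prod.mk_add_mk]
  map_smul' t u := by simp [mul_assoc]

theorem B5_sphereChart (r : ℝ) (u u' : E3 × ℝ) :
    B5 (sphereChart r u) (sphereChart r u') = ⟪u.1, u'.1⟫ - r ^ 2 * (u.2 * u'.2) := by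
  simp only [sphereChart, LinearMap.coe_mk, AddHom.coe_mk, B5_apply]
  ring

theorem B5_nInf_sphereChart (r : ℝ) (u : E3 × ℝ) : B5 (0, 1, 0) (sphereChart r u) = -u.2 := by
  simp [sphereChart, B5_apply]

theorem cpt_add_smul_of_norm_eq_one (c : E3) (r : ℝ) {ρ : E3} (hρ : ‖ρ‖ = 1) :
    cpt (c + r • ρ) = (ι5 ∘ₗ translation c ∘ₗ sphereChart r) (r • ρ, 1) := by
  rw [cpt_add]
  simp [sphereChart, norm_smul, hρ]

def stdBasis4 : Module.Basis (Fin 4) ℝ (E3 × ℝ) :=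
  ((EuclideanSpace.basisFun (Fin 3) ℝ).toBasis.prod (Module.Basis.singleton (Fin 1) ℝ)).reindex
    finSumFinEquiv

theorem stdBasis4_castSucc (i : Fin 3) :
    stdBasis4 i.castSucc = (EuclideanSpace.single i 1, 0) := by
  simp [stdBasis4, finSumFinEquiv_symm_apply_castSucc]

theorem stdBasis4_last : stdBasis4 (Fin.last 3) = (0, 1) := by
  rw [stdBasis4, Module.Basis.reindex_apply, finSumFinEquiv_symm_last]
  simp

theorem coe_stdBasis4 : ⇑stdBasis4 = ![(EuclideanSpace.single 0 1, 0),
    (EuclideanSpace.single 1 1, 0), (EuclideanSpace.single 2 1, 0), (0, 1)] := by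
  ext i : 1
  fin_cases i
  exacts [stdBasis4_castSucc 0, stdBasis4_castSucc 1, stdBasis4_castSucc 2, stdBasis4_last]

theorem B5_sphereChart_stdBasis4 (r : ℝ) (i j : Fin 4) :
    B5 (sphereChart r (stdBasis4 i)) (sphereChart r (stdBasis4 j)) =
      if i = j then (if i = 3 then -r ^ 2 else 1) else 0 := by
  rw [B5_sphereChart, coe_stdBasis4]
  fin_cases i <;> fin_cases j <;> simp [EuclideanSpace.inner_single_left]

def sphereFrame (c : E3) (r : ℝ) (i : Fin 4) : Cl :=
  ι5 (translation c (sphereChart r (stdBasis4 i)))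

def framePseudoscalar (c : E3) (r : ℝ) : Cl :=
  sphereFrame c r 0 * sphereFrame c r 1 * sphereFrame c r 2

section SphereFrame

variable (c : E3) (r : ℝ)

theorem antiCommute_sphereFrame {i j : Fin 4} (hij : i ≠ j) :
    AntiCommute (sphereFrame c r i) (sphereFrame c r j) :=
  antiCommute_ι5 (by rw [B5_translation, B5_sphereChart_stdBasis4, if_neg hij])

theorem sphereFrame_mul_self {i : Fin 4} (hi : i ≠ 3) :
    sphereFrame c r i * sphereFrame c r i = 1 := by
  rw [sphereFrame, ι5_mul_self, B5_translation, B5_sphereChart_stdBasis4, if_pos rfl, if_neg hi,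
    map_one]

theorem sphereFrame_three_mul_self :
    sphereFrame c r 3 * sphereFrame c r 3 = algebraMap ℝ Cl (-r ^ 2) := by
  rw [sphereFrame, ι5_mul_self, B5_translation, B5_sphereChart_stdBasis4, if_pos rfl, if_pos rfl]

theorem antiCommute_nInf_sphereFrame {i : Fin 4} (hi : i ≠ 3) :
    AntiCommute nInf (sphereFrame c r i) := by
  refine antiCommute_ι5 ?_
  rw [← translation_nInf c, B5_translation, B5_nInf_sphereChart, coe_stdBasis4]
  fin_cases i <;> simp_all

theorem nInf_mul_sphereFrame_three_add_swap :
    nInf * sphereFrame c r 3 + sphereFrame c r 3 * nInf = -2 := by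
  rw [nInf, sphereFrame, ι5_mul_add_swap, ← translation_nInf c, B5_translation,
    B5_nInf_sphereChart, coe_stdBasis4]
  simp [map_ofNat]

theorem cpt_eq_sphereFrame_three_sub : cpt c = sphereFrame c r 3 - (r ^ 2 / 2) • nInf := by
  have hc : cpt c = ι5 (translation c (0, 0, 1)) := by simpa using cpt_add c 0
  have h3 : sphereChart r (stdBasis4 3) = (0, 0, 1) + (r ^ 2 / 2) • (0, 1, 0) := by
    simp [coe_stdBasis4, sphereChart]
  rw [hc, sphereFrame, h3, map_add, map_smul, translation_nInf, map_add, map_smul, nInf]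
  abel

theorem w4_sphereFrame :
    w4 (sphereFrame c r 0) (sphereFrame c r 1) (sphereFrame c r 2) (sphereFrame c r 3) =
      framePseudoscalar c r * sphereFrame c r 3 :=
  w4_eq_mul_of_antiCommute (antiCommute_sphereFrame c r (by decide))
    (antiCommute_sphereFrame c r (by decide)) (antiCommute_sphereFrame c r (by decide))
    (antiCommute_sphereFrame c r (by decide)) (antiCommute_sphereFrame c r (by decide))
    (antiCommute_sphereFrame c r (by decide))

theorem framePseudoscalar_mul_self : framePseudoscalar c r * framePseudoscalar c r = -1 :=
  mul_mul_self_eq_neg_one_of_antiCommute (sphereFrame_mul_self c r (by decide))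
    (sphereFrame_mul_self c r (by decide)) (sphereFrame_mul_self c r (by decide))
    (antiCommute_sphereFrame c r (by decide)) (antiCommute_sphereFrame c r (by decide))
    (antiCommute_sphereFrame c r (by decide))

theorem antiCommute_framePseudoscalar_sphereFrame_three :
    AntiCommute (framePseudoscalar c r) (sphereFrame c r 3) :=
  (AntiCommute.mul_mul (antiCommute_sphereFrame c r (by decide))
    (antiCommute_sphereFrame c r (by decide)) (antiCommute_sphereFrame c r (by decide))).symm

theorem antiCommute_framePseudoscalar_nInf : AntiCommute (framePseudoscalar c r) nInf :=
  (AntiCommute.mul_mul (antiCommute_nInf_sphereFrame c r (by decide))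
    (antiCommute_nInf_sphereFrame c r (by decide))
    (antiCommute_nInf_sphereFrame c r (by decide))).symm

theorem exists_w4_cpt_eq_smul {ρ₁ ρ₂ ρ₃ ρ₄ : E3} (h₁ : ‖ρ₁‖ = 1) (h₂ : ‖ρ₂‖ = 1)
    (h₃ : ‖ρ₃‖ = 1) (h₄ : ‖ρ₄‖ = 1) :
    ∃ α : ℝ, w4 (cpt (c + r • ρ₁)) (cpt (c + r • ρ₂)) (cpt (c + r • ρ₃)) (cpt (c + r • ρ₄)) =
      α • (framePseudoscalar c r * sphereFrame c r 3) := by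
  let u : Fin 4 → E3 × ℝ := ![(r • ρ₁, 1), (r • ρ₂, 1), (r • ρ₃, 1), (r • ρ₄, 1)]
  have key := AlternatingMap.apply_eq_det_smul stdBasis4
    (w4Alternating.compLinearMap (ι5 ∘ₗ translation c ∘ₗ sphereChart r)) u
  simp only [AlternatingMap.compLinearMap_apply, w4Alternating_apply] at key
  refine ⟨stdBasis4.det u, ?_⟩
  rw [cpt_add_smul_of_norm_eq_one c r h₁, cpt_add_smul_of_norm_eq_one c r h₂,
    cpt_add_smul_of_norm_eq_one c r h₃, cpt_add_smul_of_norm_eq_one c r h₄, ← w4_sphereFrame]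
  exact key

end SphereFrame

/-- radius and center extraction from the sphere 4-vector:
r² = V₄²/(V₄∧n)² and C = (1/2)r²n + V₄/(−V₄∧n). -/
theorem sphere_radius_center_extraction
    (c : E3) (r : ℝ)
    (r₁ r₂ r₃ r₄ : E3)
    (h₁ : ‖r₁‖ = 1) (h₂ : ‖r₂‖ = 1) (h₃ : ‖r₃‖ = 1) (h₄ : ‖r₄‖ = 1)
    (p₁ p₂ p₃ p₄ : E3)
    (hp₁ : p₁ = c + r • r₁) (hp₂ : p₂ = c + r • r₂)
    (hp₃ : p₃ = c + r • r₃) (hp₄ : p₄ = c + r • r₄)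
    (V₄ : Cl) (hV : V₄ = w4 (cpt p₁) (cpt p₂) (cpt p₃) (cpt p₄))
    (his : -(fwv V₄ nInf * Nb) ≠ 0) :
    ∃ s : ℝ, fwv V₄ nInf * fwv V₄ nInf = algebraMap ℝ Cl s ∧ s ≠ 0 ∧
      V₄ * V₄ = algebraMap ℝ Cl (r ^ 2 * s) ∧
      cpt c = (2:ℝ)⁻¹ • (r ^ 2 • nInf)
        + s⁻¹ • (V₄ * (-(fwv V₄ nInf))) := by
  obtain ⟨α, hα⟩ := exists_w4_cpt_eq_smul c r h₁ h₂ h₃ h₄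
  subst hp₁ hp₂ hp₃ hp₄
  obtain rfl : V₄ = α • (framePseudoscalar c r * sphereFrame c r 3) := hV.trans hα
  have hJ := framePseudoscalar_mul_self c r
  have hJH := antiCommute_framePseudoscalar_sphereFrame_three c r
  have hJn := antiCommute_framePseudoscalar_nInf c r
  have hnH := nInf_mul_sphereFrame_three_add_swap c r
  rw [fwv_smul_mul_nInf hJn hnH] at his ⊢
  have hα0 : α ≠ 0 := by
    rintro rfl
    simp at his
  refine ⟨-α ^ 2, ?_, by simpa using hα0, ?_, ?_⟩
  · rw [smul_mul_smul_comm, mul_add_one_mul_self_of_antiCommute hJ hJH hJn nInf_mul_self hnH]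
    simp [Algebra.algebraMap_eq_smul_one, sq]
  · rw [smul_mul_smul_comm, hJH.mul_mul_mul_left hJ, sphereFrame_three_mul_self]
    simp [Algebra.algebraMap_eq_smul_one, sq, smul_smul, mul_comm]
  · have hαα : (-α ^ 2)⁻¹ * (α * α) = -1 := by field_simp
    rw [mul_neg, smul_mul_smul_comm, hJH.mul_mul_mul_left hJ, cpt_eq_sphereFrame_three_sub c r,
      mul_add, ← mul_assoc, sphereFrame_three_mul_self, Algebra.algebraMap_eq_smul_one,
      smul_one_mul, mul_one, smul_neg, smul_smul (-α ^ 2)⁻¹, hαα]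
    module
end
end
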